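/- arXiv:2601.11959 — 2 statements merged into one kernel-verified Lean document; each statement's English description precedes it below -/
import Mathlib

section
/- Let A = SJS⁻¹ where J is a Jordan canonical form, and let z ∈ ℂ whose distance to every eigenvalue of A is at least a > 1. Then ‖(zI − A)⁻¹‖ ≤ κ_S · (1 − a^{−N})/(a − 1), where κ_S = ‖S‖‖S⁻¹‖ and N is the dimension. -/
open scoped Matrix.Norms.L2Operator

/-!
Write `zI - J = D - U` with `D` diagonal (entries `z - λᵢ`) and `U` the superdiagonal part of `J`.
Then `zI - J = D (1 - D⁻¹U)` and `D⁻¹U` is supported on the superdiagonal, so `(D⁻¹U)^N = 0` and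
`(zI - J)⁻¹ = ∑_{k<N} (D⁻¹U)^k D⁻¹` is a finite Neumann series. A matrix supported on the graph of a
permutation has norm at most its largest entry, so `‖D⁻¹‖ ≤ a⁻¹` and `‖U‖ ≤ 1`, and the series has
norm at most `∑_{k<N} a^{-(k+1)} = (1 - a^{-N})/(a - 1)`. Conjugating by `S` costs `‖S‖‖S⁻¹‖`.
-/

open Finset Matrix

namespace Matrix

theorem l2_opNorm_le_of_apply_eq_zero_of_ne_perm {n 𝕜 : Type*} [Fintype n] [DecidableEq n]
    [RCLike 𝕜] (M : Matrix n n 𝕜) (σ : Equiv.Perm n) {c : ℝ} (hc : 0 ≤ c)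
    (hM : ∀ i j, j ≠ σ i → M i j = 0) (hMc : ∀ i, ‖M i (σ i)‖ ≤ c) : ‖M‖ ≤ c := by
  have hfactor : M = diagonal (fun i => M i (σ i)) * σ.permMatrix 𝕜 := by
    ext i j
    by_cases hj : j = σ i
    · simp [hj, PEquiv.toMatrix_apply]
    · simp [hM i j hj, PEquiv.toMatrix_apply, Ne.symm hj]
  calc ‖M‖ ≤ ‖diagonal (fun i => M i (σ i))‖ * ‖σ.permMatrix 𝕜‖ := by
        nth_rw 1 [hfactor]; exact norm_mul_le _ _
    _ ≤ c * 1 := by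
        rw [l2_opNorm_diagonal]
        gcongr
        · exact (pi_norm_le_iff_of_nonneg hc).mpr hMc
        · exact permMatrix_l2_opNorm_le σ
    _ = c := mul_one c

theorem smul_one_sub_conj {n R : Type*} [Fintype n] [DecidableEq n] [CommRing R]
    {S : Matrix n n R} (hS : IsUnit S) (J : Matrix n n R) (z : R) :
    z • 1 - S * J * S⁻¹ = S * (z • 1 - J) * S⁻¹ := by
  rw [mul_sub, sub_mul, mul_smul_one, Matrix.smul_mul,
    mul_nonsing_inv S ((isUnit_iff_isUnit_det S).mp hS)]

theorem conj_mul_conj_eq_one {n R : Type*} [Fintype n] [DecidableEq n] [CommRing R]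
    {S X Y : Matrix n n R} (hS : IsUnit S) (hXY : X * Y = 1) :
    S * X * S⁻¹ * (S * Y * S⁻¹) = 1 := by
  have hSdet : IsUnit S.det := (isUnit_iff_isUnit_det S).mp hS
  simp only [Matrix.mul_assoc, nonsing_inv_mul_cancel_left _ _ hSdet]
  rw [← Matrix.mul_assoc X, hXY, Matrix.one_mul, mul_nonsing_inv _ hSdet]

theorem smul_one_sub_eq_diagonal_sub {n R : Type*} [DecidableEq n] [CommRing R]
    (J : Matrix n n R) (z : R) :
    z • 1 - J = diagonal (fun i => z - J i i) - (J - diagonal (diag J)) := by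
  ext i j
  by_cases h : i = j <;> simp [h]

variable {N : ℕ} {R : Type*}

def IsSuperdiagonal [Zero R] (M : Matrix (Fin N) (Fin N) R) : Prop :=
  ∀ i j : Fin N, (j : ℕ) ≠ i + 1 → M i j = 0

namespace IsSuperdiagonal

theorem diagonal_mul [NonUnitalNonAssocSemiring R] {M : Matrix (Fin N) (Fin N) R}
    (hM : M.IsSuperdiagonal) (v : Fin N → R) : (diagonal v * M).IsSuperdiagonal := by
  intro i j hij
  rw [Matrix.diagonal_mul, hM i j hij, mul_zero]

theorem pow_apply_eq_zero [Semiring R] {M : Matrix (Fin N) (Fin N) R} (hM : M.IsSuperdiagonal)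
    (k : ℕ) {i j : Fin N} (hij : (j : ℕ) ≠ i + k) : (M ^ k) i j = 0 := by
  induction k generalizing j with
  | zero => exact one_apply_ne fun h => hij (by simp [h])
  | succ k ih =>
    rw [pow_succ, mul_apply]
    refine sum_eq_zero fun l _ => ?_
    by_cases hl : (l : ℕ) = i + k
    · rw [hM l j (by omega), mul_zero]
    · rw [ih hl, zero_mul]

theorem pow_eq_zero [Semiring R] {M : Matrix (Fin N) (Fin N) R} (hM : M.IsSuperdiagonal) :
    M ^ N = 0 := by
  ext i j
  exact hM.pow_apply_eq_zero N (by omega)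

theorem l2_opNorm_le {𝕜 : Type*} [RCLike 𝕜] {M : Matrix (Fin N) (Fin N) 𝕜}
    (hM : M.IsSuperdiagonal) {c : ℝ} (hc : 0 ≤ c) (hMc : ∀ i j, ‖M i j‖ ≤ c) : ‖M‖ ≤ c := by
  cases N with
  | zero => simp [Subsingleton.elim M 0, hc]
  | succ n =>
    -- the superdiagonal lies on the graph of the cyclic shift `i ↦ i + 1`
    refine M.l2_opNorm_le_of_apply_eq_zero_of_ne_perm (finRotate (n + 1)) hc
      (fun i j hj => hM i j fun hij => hj (Fin.ext ?_)) fun i => hMc i _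
    rw [hij, coe_finRotate_of_ne_last]
    rintro rfl
    rw [Fin.val_last] at hij
    omega

end IsSuperdiagonal

section JordanForm

variable {𝕜 : Type*} [RCLike 𝕜] {J : Matrix (Fin N) (Fin N) 𝕜}

theorem isSuperdiagonal_sub_diagonal_diag
    (hJ0 : ∀ i j : Fin N, (j : ℕ) ≠ (i : ℕ) → (j : ℕ) ≠ (i : ℕ) + 1 → J i j = 0) :
    (J - diagonal (diag J)).IsSuperdiagonal := fun i j hij => by
  by_cases hji : j = i
  · simp [hji]
  · simp [diagonal_apply_ne _ (Ne.symm hji), hJ0 i j (fun h => hji (Fin.ext h)) hij]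

theorem l2_opNorm_sub_diagonal_diag_le_one
    (hJ0 : ∀ i j : Fin N, (j : ℕ) ≠ (i : ℕ) → (j : ℕ) ≠ (i : ℕ) + 1 → J i j = 0)
    (hJ1 : ∀ i j : Fin N, (j : ℕ) = (i : ℕ) + 1 → J i j = 0 ∨ J i j = 1) :
    ‖J - diagonal (diag J)‖ ≤ 1 := by
  have hU := isSuperdiagonal_sub_diagonal_diag hJ0
  refine hU.l2_opNorm_le zero_le_one fun i j => ?_
  by_cases hij : (j : ℕ) = i + 1
  · have hji : i ≠ j := fun h => by simp [h] at hij
    rcases hJ1 i j hij with h | h <;> simp [diagonal_apply_ne _ hji, h]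
  · simp [hU i j hij]

end JordanForm

end Matrix

theorem mul_sub_mul_sum_pow_mul_eq_one {R : Type*} [Ring R] {D D' U : R} (hD : D * D' = 1)
    {n : ℕ} (hn : (D' * U) ^ n = 0) : (D - U) * ((∑ k ∈ range n, (D' * U) ^ k) * D') = 1 := by
  have hsplit : D - U = D * (1 - D' * U) := by
    rw [mul_sub, mul_one, ← mul_assoc, hD, one_mul]
  rw [hsplit, mul_assoc, ← mul_assoc (1 - _), mul_neg_geom_sum, hn, sub_zero, one_mul, hD]

theorem norm_pow_mul_le {R : Type*} [NormedRing R] (B C : R) (k : ℕ) :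
    ‖B ^ k * C‖ ≤ ‖B‖ ^ k * ‖C‖ := by
  induction k with
  | zero => simp
  | succ k ih =>
    rw [pow_succ', mul_assoc, pow_succ', mul_assoc]
    exact (norm_mul_le _ _).trans (mul_le_mul_of_nonneg_left ih (norm_nonneg B))

theorem norm_sum_pow_mul_le {R : Type*} [NormedRing R] {B C : R} {r s : ℝ} (hr : ‖B‖ ≤ r)
    (hs : ‖C‖ ≤ s) (n : ℕ) : ‖(∑ k ∈ range n, B ^ k) * C‖ ≤ ∑ k ∈ range n, r ^ k * s := by
  rw [sum_mul]
  refine (norm_sum_le _ _).trans (sum_le_sum fun k _ => (norm_pow_mul_le B C k).trans ?_)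
  have := (norm_nonneg B).trans hr
  gcongr

theorem sum_range_inv_pow_mul_inv {a : ℝ} (ha0 : a ≠ 0) (ha1 : a ≠ 1) (n : ℕ) :
    ∑ k ∈ range n, a⁻¹ ^ k * a⁻¹ = (1 - a⁻¹ ^ n) / (a - 1) := by
  have : a⁻¹ ≠ 1 := by simpa using ha1
  rw [← sum_mul, geom_sum_eq this]
  have : a - 1 ≠ 0 := sub_ne_zero.mpr ha1
  field_simp
  ring

theorem resolvent_bound_jordan_general {N : ℕ} (A S J : Matrix (Fin N) (Fin N) ℂ)
    (hS : IsUnit S) (hA : A = S * J * S⁻¹)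
    -- `J` is a Jordan canonical form: bidiagonal, with superdiagonal entries in {0,1}
    (hJ0 : ∀ i j : Fin N, (j : ℕ) ≠ (i : ℕ) → (j : ℕ) ≠ (i : ℕ) + 1 → J i j = 0)
    (hJ1 : ∀ i j : Fin N, (j : ℕ) = (i : ℕ) + 1 → J i j = 0 ∨ J i j = 1)
    (z : ℂ) (a : ℝ) (ha : 1 < a)
    (hdist : ∀ i : Fin N, a ≤ ‖z - J i i‖) :
    IsUnit (z • (1 : Matrix (Fin N) (Fin N) ℂ) - A) ∧
      ‖(z • (1 : Matrix (Fin N) (Fin N) ℂ) - A)⁻¹‖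
        ≤ ‖S‖ * ‖S⁻¹‖ * ((1 - a⁻¹ ^ N) / (a - 1)) := by
  set U := J - diagonal (diag J)
  set Dinv := diagonal fun i => (z - J i i)⁻¹
  set R := (∑ k ∈ range N, (Dinv * U) ^ k) * Dinv
  have hDinv : ‖Dinv‖ ≤ a⁻¹ := by
    rw [l2_opNorm_diagonal, pi_norm_le_iff_of_nonneg (by positivity)]
    exact fun i => (norm_inv _).trans_le (inv_anti₀ (by linarith) (hdist i))
  have hB : ‖Dinv * U‖ ≤ a⁻¹ := by
    simpa using norm_mul_le_of_le hDinv (l2_opNorm_sub_diagonal_diag_le_one hJ0 hJ1)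
  have hright : (z • 1 - J) * R = 1 := by
    rw [smul_one_sub_eq_diagonal_sub]
    refine mul_sub_mul_sum_pow_mul_eq_one ?_
      ((isSuperdiagonal_sub_diagonal_diag hJ0).diagonal_mul _).pow_eq_zero
    rw [diagonal_mul_diagonal, ← diagonal_one]
    exact congrArg diagonal <| funext fun i =>
      mul_inv_cancel₀ (norm_pos_iff.mp (by linarith [hdist i]))
  have hconj : (z • 1 - A) * (S * R * S⁻¹) = 1 := by
    rw [hA, smul_one_sub_conj hS]
    exact conj_mul_conj_eq_one hS hright
  refine ⟨(isUnit_iff_isUnit_det _).mpr (isUnit_det_of_right_inverse hconj), ?_⟩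
  calc ‖(z • 1 - A)⁻¹‖ = ‖S * R * S⁻¹‖ := by rw [inv_eq_right_inv hconj]
    _ ≤ ‖S‖ * ‖R‖ * ‖S⁻¹‖ := norm_mul₃_le
    _ ≤ ‖S‖ * (∑ k ∈ range N, a⁻¹ ^ k * a⁻¹) * ‖S⁻¹‖ := by
      gcongr
      exact norm_sum_pow_mul_le hB hDinv N
    _ = ‖S‖ * ‖S⁻¹‖ * ((1 - a⁻¹ ^ N) / (a - 1)) := by
      rw [sum_range_inv_pow_mul_inv (by positivity) ha.ne']
      ring

/-- Resolvent bound via the Jordan canonical form: if `A = S J S⁻¹` with `J` a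
Jordan matrix and `z` at distance at least `a > 1` from every eigenvalue
(i.e. from every diagonal entry of `J`), then
`‖(zI − A)⁻¹‖ ≤ κ_S (1 − a^{−N})/(a − 1)` where `κ_S = ‖S‖‖S⁻¹‖`. -/
theorem resolvent_bound_jordan {N : ℕ} (A S J : Matrix (Fin N) (Fin N) ℂ)
    (hS : IsUnit S) (hA : A = S * J * S⁻¹)
    -- `J` is a Jordan canonical form: bidiagonal, with superdiagonal entries in {0,1},
    -- and a superdiagonal `1` only joins equal diagonal (eigenvalue) entries
    (hJ0 : ∀ i j : Fin N, (j : ℕ) ≠ (i : ℕ) → (j : ℕ) ≠ (i : ℕ) + 1 → J i j = 0)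
    (hJ1 : ∀ i j : Fin N, (j : ℕ) = (i : ℕ) + 1 → J i j = 0 ∨ J i j = 1)
    (hJblock : ∀ i j : Fin N, (j : ℕ) = (i : ℕ) + 1 → J i j = 1 → J i i = J j j)
    (z : ℂ) (a : ℝ) (ha : 1 < a)
    (hdist : ∀ i : Fin N, a ≤ ‖z - J i i‖) :
    IsUnit (z • (1 : Matrix (Fin N) (Fin N) ℂ) - A) ∧
      ‖(z • (1 : Matrix (Fin N) (Fin N) ℂ) - A)⁻¹‖
        ≤ ‖S‖ * ‖S⁻¹‖ * ((1 - a⁻¹ ^ N) / (a - 1)) :=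
  resolvent_bound_jordan_general A S J hS hA hJ0 hJ1 z a ha hdist
end

section
/- Let c = (c₀,…,c_{K−1}) ∈ ℂ^K, let U_i be unitaries on ℂ^{2ⁿ}, and let V, Ṽ be unitaries on ℂ^K whose first column and first row respectively equal (√c₀,…,√c_{K−1})ᵀ/√‖c‖₁ and (√c₀,…,√c_{K−1})/√‖c‖₁, with √c_i = √r_i e^{iθ_i/2} for c_i = r_i e^{iθ_i}. Let U = Σ_i |i⟩⟨i| ⊗ U_i. Then W = (Ṽ ⊗ I)U(V ⊗ I) satisfies (⟨0|⊗I) W (|0⟩⊗I) = (1/‖c‖₁) Σ_{i=0}^{K−1} c_i U_i; i.e., W is a (‖c‖₁, log K, 0)-block-encoding of Σ c_i U_i. -/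
open scoped Matrix Kronecker

namespace Matrix

variable {l m n o : Type*} [Fintype m] [Fintype n] [DecidableEq n] {α : Type*} [Semiring α]

theorem kronecker_one_mul_apply (A : Matrix l m α) (M : Matrix (m × n) o α)
    (a : l) (j : n) (q : o) :
    ((A ⊗ₖ (1 : Matrix n n α)) * M) (a, j) q = ∑ i, A a i * M (i, j) q := by
  simp only [mul_apply, kroneckerMap_apply, one_apply, Fintype.sum_prod_type, mul_ite,
    mul_one, mul_zero, ite_mul, zero_mul, Finset.sum_ite_eq, Finset.mem_univ, if_true]

theorem mul_kronecker_one_apply (M : Matrix o (m × n) α) (B : Matrix m l α)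
    (p : o) (b : l) (k : n) :
    (M * (B ⊗ₖ (1 : Matrix n n α))) p (b, k) = ∑ i, M p (i, k) * B i b := by
  simp only [mul_apply, kroneckerMap_apply, one_apply, Fintype.sum_prod_type, mul_ite,
    mul_one, mul_zero, Finset.sum_ite_eq', Finset.mem_univ, if_true]

end Matrix

theorem Complex.div_ofReal_sqrt_sq {r : ℝ} (hr : 0 ≤ r) (z : ℂ) :
    (z / (Real.sqrt r : ℂ)) ^ 2 = z ^ 2 / r := by
  rw [div_pow, ← Complex.ofReal_pow, Real.sq_sqrt hr]

theorem lcu_block_encoding_general {K D : ℕ} [NeZero K]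
    (c : Fin K → ℂ) (s : Fin K → ℂ) (hs : ∀ i, s i ^ 2 = c i)
    (cn : ℝ) (hcpos : 0 < cn)
    (U : Fin K → Matrix (Fin D) (Fin D) ℂ)
    (V Vt : Matrix (Fin K) (Fin K) ℂ)
    (hVcol : ∀ i, V i 0 = s i / (Real.sqrt cn : ℂ))
    (hVtrow : ∀ i, Vt 0 i = s i / (Real.sqrt cn : ℂ))
    (SEL : Matrix (Fin K × Fin D) (Fin K × Fin D) ℂ)
    (hSEL : ∀ p q, SEL p q = if p.1 = q.1 then U p.1 p.2 q.2 else 0) :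
    ∀ j k : Fin D,
      ((Vt ⊗ₖ (1 : Matrix (Fin D) (Fin D) ℂ)) * SEL *
          (V ⊗ₖ (1 : Matrix (Fin D) (Fin D) ℂ))) (0, j) (0, k)
        = (cn : ℂ)⁻¹ * ∑ i, c i * U i j k := by
  intro j k
  calc _ = ∑ i, Vt 0 i * U i j k * V i 0 := by
        simp only [Matrix.mul_kronecker_one_apply, Matrix.kronecker_one_mul_apply, hSEL,
          Finset.sum_mul, ite_mul, mul_ite, zero_mul, mul_zero]
        rw [Finset.sum_comm]
        simp only [Finset.sum_ite_eq, Finset.mem_univ, if_true]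
    _ = _ := by
        rw [Finset.mul_sum]
        refine Finset.sum_congr rfl fun i _ => ?_
        rw [hVtrow, hVcol, ← hs]
        linear_combination U i j k * Complex.div_ofReal_sqrt_sq hcpos.le (s i)

/-- The LCU lemma with complex coefficients: with prepare oracles `V, Ṽ` whose
first column/row is `(√c_i)/√‖c‖₁` and select oracle `U = Σ_i |i⟩⟨i| ⊗ U_i`,
the circuit `W = (Ṽ ⊗ I) U (V ⊗ I)` is a `(‖c‖₁, log K, 0)`-block-encoding of
`Σ_i c_i U_i`, i.e. `(⟨0| ⊗ I) W (|0⟩ ⊗ I) = (1/‖c‖₁) Σ_i c_i U_i`. -/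
theorem lcu_block_encoding {K D : ℕ} [NeZero K]
    (c : Fin K → ℂ) (s : Fin K → ℂ) (hs : ∀ i, s i ^ 2 = c i)
    (cn : ℝ) (hcn : cn = ∑ i, ‖c i‖) (hcpos : 0 < cn)
    (U : Fin K → Matrix (Fin D) (Fin D) ℂ)
    (hU : ∀ i, U i ∈ Matrix.unitaryGroup (Fin D) ℂ)
    (V Vt : Matrix (Fin K) (Fin K) ℂ)
    (hV : V ∈ Matrix.unitaryGroup (Fin K) ℂ)
    (hVt : Vt ∈ Matrix.unitaryGroup (Fin K) ℂ)
    (hVcol : ∀ i, V i 0 = s i / (Real.sqrt cn : ℂ))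
    (hVtrow : ∀ i, Vt 0 i = s i / (Real.sqrt cn : ℂ))
    (SEL : Matrix (Fin K × Fin D) (Fin K × Fin D) ℂ)
    (hSEL : ∀ p q, SEL p q = if p.1 = q.1 then U p.1 p.2 q.2 else 0) :
    ∀ j k : Fin D,
      ((Vt ⊗ₖ (1 : Matrix (Fin D) (Fin D) ℂ)) * SEL *
          (V ⊗ₖ (1 : Matrix (Fin D) (Fin D) ℂ))) (0, j) (0, k)
        = (cn : ℂ)⁻¹ * ∑ i, c i * U i j k :=
  lcu_block_encoding_general c s hs cn hcpos U V Vt hVcol hVtrow SEL hSEL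
end
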